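/- Let G be a finite group. Every element of the subalgebra of class functions generated by the Wedderburn sums {σ_X : X ∈ 𝒴} of a partition 𝒴 of Irr(G) arising from a supercharacter theory lies in the linear span of {σ_Y : Y ∈ 𝒴}. -/

import Mathlib

open scoped Classical

/-- The set of irreducible characters of `G` over `ℂ`. -/
noncomputable def Irr (G : Type) [Group G] [Fintype G] : Set (G → ℂ) :=
  {χ | ∃ V : FDRep ℂ G, CategoryTheory.Simple V ∧ χ = V.character}

/-- The trivial character. -/
noncomputable def triv (G : Type) [Group G] [Fintype G] : G → ℂ := fun _ => 1

/-- The Wedderburn sum `σ_X = ∑_{χ ∈ X} χ(1)·χ`. -/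
noncomputable def wsum {G : Type} [Group G] [Fintype G] (X : Set (G → ℂ)) : G → ℂ :=
  fun g => ∑ᶠ χ ∈ X, χ 1 * χ g

/-- `P` is a partition of the set `S`. -/
def IsPartitionOf {α : Type*} (S : Set α) (P : Set (Set α)) : Prop :=
  (∀ p ∈ P, p.Nonempty ∧ p ⊆ S) ∧ ∀ a ∈ S, ∃! p, p ∈ P ∧ a ∈ p

/-- A partial partition of `Irr G`: nonempty pairwise disjoint subsets of `Irr G`. -/
def IsPartialPartition (G : Type) [Group G] [Fintype G] (P : Set (Set (G → ℂ))) : Prop :=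
  (∀ p ∈ P, p.Nonempty ∧ p ⊆ Irr G) ∧ ∀ p ∈ P, ∀ q ∈ P, p ≠ q → p ∩ q = ∅

/-- A supercharacter theory of `G` in the sense of Diaconis–Isaacs: `Y` partitions
`Irr G`, `K` partitions `G` with `{1} ∈ K`, `|Y| = |K|`, and every Wedderburn sum
`σ_X`, `X ∈ Y`, is constant on every member of `K`. -/
def IsSCT (G : Type) [Group G] [Fintype G] (Y : Set (Set (G → ℂ))) (K : Set (Set G)) : Prop :=
  IsPartitionOf (Irr G) Y ∧ IsPartitionOf (Set.univ : Set G) K ∧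
    ({(1 : G)} : Set G) ∈ K ∧ Y.ncard = K.ncard ∧
    ∀ X ∈ Y, ∀ k ∈ K, ∀ g ∈ k, ∀ h ∈ k, wsum X g = wsum X h

/-- The coefficient of `χ(1)·χ` in the expansion of the class function `a` in the
orthogonal basis `{φ(1)·φ : φ ∈ Irr G}` of `cf(G)`. -/
noncomputable def coeff {G : Type} [Group G] [Fintype G] (χ a : G → ℂ) : ℂ :=
  (∑ g : G, starRingEnd ℂ (χ g) * a g) / ((Fintype.card G : ℂ) * χ 1)

/-- The (non-unital) subalgebra of `cf(G)` generated by the Wedderburn sums of `𝒳`. -/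
noncomputable def wAlg (G : Type) [Group G] [Fintype G] (𝒳 : Set (Set (G → ℂ))) :
    NonUnitalSubalgebra ℂ (G → ℂ) :=
  NonUnitalAlgebra.adjoin ℂ {s | ∃ X ∈ 𝒳, s = wsum X}

/-- The equivalence relation defining the filtration `ℱ(𝒳)`: `χ ∼ ψ` iff the
coefficients of `χ(1)χ` and `ψ(1)ψ` agree in every element of the algebra `𝒜`. -/
def frel (G : Type) [Group G] [Fintype G] (𝒳 : Set (Set (G → ℂ))) (χ ψ : G → ℂ) : Prop :=
  ∀ a ∈ wAlg G 𝒳, coeff χ a = coeff ψ a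

/-- The filtration `ℱ(𝒳)`: the partition of `Irr G` into equivalence classes of `frel`. -/
def Filt (G : Type) [Group G] [Fintype G] (𝒳 : Set (Set (G → ℂ))) : Set (Set (G → ℂ)) :=
  {C | ∃ χ ∈ Irr G, C = {ψ ∈ Irr G | frel G 𝒳 χ ψ}}

/-!
The first orthogonality relation makes the Wedderburn sums `σ_X`, `X ∈ 𝒴`, pairwise orthogonal
with `⟨σ_X, σ_X⟩ = |G| ∑_{χ ∈ X} χ(1)² ≠ 0`, so they are linearly independent and span a space of
dimension `|𝒴| = |𝒦|`. This space lies in the algebra of functions constant on the blocks of `𝒦`,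
whose dimension is at most `|𝒦|`; hence the span is that algebra and is closed under products.
-/

open scoped ComplexOrder

section CharacterTheory

variable {G : Type} [Group G] [Fintype G]

noncomputable def charPairing (G : Type) [Group G] [Fintype G] :
    (G → ℂ) →ₗ[ℂ] (G → ℂ) →ₗ[ℂ] ℂ :=
  LinearMap.mk₂ ℂ (fun f h => ∑ g, f g * h g⁻¹)
    (fun _ _ _ => by simp only [Pi.add_apply, add_mul, Finset.sum_add_distrib])
    (fun _ _ _ => by simp only [Pi.smul_apply, smul_eq_mul, mul_assoc, Finset.mul_sum])
    (fun _ _ _ => by simp only [Pi.add_apply, mul_add, Finset.sum_add_distrib])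
    (fun _ _ _ => by simp only [Pi.smul_apply, smul_eq_mul, mul_left_comm, Finset.mul_sum])

theorem charPairing_apply (f h : G → ℂ) : charPairing G f h = ∑ g, f g * h g⁻¹ := rfl

theorem charPairing_character (V W : FDRep ℂ G) [CategoryTheory.Simple V]
    [CategoryTheory.Simple W] :
    charPairing G V.character W.character = if Nonempty (V ≅ W) then (Nat.card G : ℂ) else 0 := by
  have hcard : (Nat.card G : ℂ) ≠ 0 := Nat.cast_ne_zero.2 Nat.card_pos.ne'
  have := invertibleOfNonzero hcard
  have horth := FDRep.char_orthonormal V W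
  rw [inv_mul_eq_iff_eq_mul₀ hcard, ← charPairing_apply] at horth
  rw [horth]
  split_ifs <;> simp

theorem charPairing_eq_of_mem_Irr {χ ψ : G → ℂ} (hχ : χ ∈ Irr G) (hψ : ψ ∈ Irr G) :
    charPairing G χ ψ = if χ = ψ then (Nat.card G : ℂ) else 0 := by
  obtain ⟨V, hV, rfl⟩ := hχ
  obtain ⟨W, hW, rfl⟩ := hψ
  by_cases hVW : V.character = W.character
  · rw [if_pos hVW, ← hVW, charPairing_character, if_pos ⟨CategoryTheory.Iso.refl V⟩]
  · rw [if_neg hVW, charPairing_character, if_neg fun ⟨e⟩ => hVW (FDRep.char_iso e)]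

theorem linearIndepOn_Irr : LinearIndepOn ℂ id (Irr G) := by
  refine LinearMap.linearIndependent_of_isOrthoᵢ (B := charPairing G) ?_ fun χ => ?_
  · intro χ ψ hne
    show charPairing G χ ψ = 0
    rw [charPairing_eq_of_mem_Irr χ.2 ψ.2, if_neg (Subtype.coe_ne_coe.2 hne)]
  · show charPairing G χ χ ≠ 0
    rw [charPairing_eq_of_mem_Irr χ.2 χ.2, if_pos rfl]
    exact Nat.cast_ne_zero.2 Nat.card_pos.ne'

theorem finite_Irr : (Irr G).Finite :=
  LinearIndependent.setFinite linearIndepOn_Irr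

theorem apply_one_pos_of_mem_Irr {χ : G → ℂ} (hχ : χ ∈ Irr G) : 0 < χ 1 := by
  obtain ⟨V, hV, rfl⟩ := hχ
  rw [FDRep.char_one, Nat.cast_pos, Module.finrank_pos_iff, ← not_subsingleton_iff_nontrivial]
  intro hsub
  have hzero : V.character = 0 := by
    ext g
    change LinearMap.trace ℂ _ (V.ρ g) = 0
    rw [Subsingleton.elim (V.ρ g) 0, map_zero]
  have hself := charPairing_eq_of_mem_Irr (χ := V.character) ⟨V, hV, rfl⟩ ⟨V, hV, rfl⟩
  rw [if_pos rfl, hzero, map_zero] at hself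
  exact Nat.cast_ne_zero.2 Nat.card_pos.ne' hself.symm

theorem wsum_eq_sum {X : Set (G → ℂ)} (hX : X.Finite) : wsum X = ∑ χ ∈ hX.toFinset, χ 1 • χ := by
  ext g
  simp only [wsum, ← finsum_mem_coe_finset, hX.coe_toFinset, Finset.sum_apply, Pi.smul_apply,
    smul_eq_mul]

theorem charPairing_wsum {X X' : Set (G → ℂ)} (hX : X.Finite) (hX' : X'.Finite) :
    charPairing G (wsum X) (wsum X') =
      ∑ χ ∈ hX.toFinset, ∑ ψ ∈ hX'.toFinset, χ 1 * ψ 1 * charPairing G χ ψ := by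
  simp only [wsum_eq_sum hX, wsum_eq_sum hX', map_sum, map_smul, LinearMap.sum_apply,
    LinearMap.smul_apply, smul_eq_mul, Finset.mul_sum, mul_assoc]
  rw [Finset.sum_comm]
  exact Finset.sum_congr rfl fun _ _ => Finset.sum_congr rfl fun _ _ => mul_left_comm _ _ _

theorem charPairing_wsum_of_disjoint {X X' : Set (G → ℂ)} (hX : X ⊆ Irr G) (hX' : X' ⊆ Irr G)
    (hdisj : Disjoint X X') : charPairing G (wsum X) (wsum X') = 0 := by
  rw [charPairing_wsum (finite_Irr.subset hX) (finite_Irr.subset hX')]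
  refine Finset.sum_eq_zero fun χ hχ => Finset.sum_eq_zero fun ψ hψ => ?_
  rw [Set.Finite.mem_toFinset] at hχ hψ
  rw [charPairing_eq_of_mem_Irr (hX hχ) (hX' hψ), if_neg (hdisj.ne_of_mem hχ hψ), mul_zero]

theorem charPairing_wsum_self_pos {X : Set (G → ℂ)} (hX : X ⊆ Irr G) (hne : X.Nonempty) :
    0 < charPairing G (wsum X) (wsum X) := by
  have hfin := finite_Irr.subset hX
  rw [charPairing_wsum hfin hfin]
  refine Finset.sum_pos (fun χ hχ => ?_) (by simpa using hne)
  rw [Set.Finite.mem_toFinset] at hχ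
  rw [Finset.sum_eq_single_of_mem χ ((Set.Finite.mem_toFinset _).2 hχ) fun ψ hψ hne => ?_,
    charPairing_eq_of_mem_Irr (hX hχ) (hX hχ), if_pos rfl]
  · have hdeg := apply_one_pos_of_mem_Irr (hX hχ)
    exact mul_pos (mul_pos hdeg hdeg) (Nat.cast_pos.2 Nat.card_pos)
  · rw [Set.Finite.mem_toFinset] at hψ
    rw [charPairing_eq_of_mem_Irr (hX hχ) (hX hψ), if_neg hne.symm, mul_zero]

theorem linearIndepOn_wsum {P : Set (Set (G → ℂ))} (hP : IsPartialPartition G P) :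
    LinearIndepOn ℂ wsum P := by
  refine LinearMap.linearIndependent_of_isOrthoᵢ (B := charPairing G) ?_ fun X => ?_
  · intro X X' hne
    exact charPairing_wsum_of_disjoint (hP.1 X X.2).2 (hP.1 X' X'.2).2
      (Set.disjoint_iff_inter_eq_empty.2 (hP.2 X X.2 X' X'.2 (Subtype.coe_ne_coe.2 hne)))
  · exact (charPairing_wsum_self_pos (hP.1 X X.2).2 (hP.1 X X.2).1).ne'

theorem finrank_span_wsum {P : Set (Set (G → ℂ))} (hP : IsPartialPartition G P) :
    Module.finrank ℂ (Submodule.span ℂ (wsum '' P)) = P.ncard := by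
  have hli := linearIndepOn_wsum hP
  have := hli.finite
  have := Fintype.ofFinite P
  rw [Set.image_eq_range, finrank_span_eq_card hli, Fintype.card_eq_nat_card, Nat.card_coe_set_eq]

theorem IsPartitionOf.isPartialPartition {P : Set (Set (G → ℂ))}
    (hP : IsPartitionOf (Irr G) P) : IsPartialPartition G P := by
  refine ⟨hP.1, fun p hp q hq hne => Set.eq_empty_of_forall_notMem fun χ ⟨hχp, hχq⟩ => hne ?_⟩
  obtain ⟨r, -, hr⟩ := hP.2 χ ((hP.1 p hp).2 hχp)
  exact (hr p ⟨hp, hχp⟩).trans (hr q ⟨hq, hχq⟩).symm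

end CharacterTheory

section ConstOnBlocks

variable {α : Type*} (R : Type*)

def constOnBlocks [CommSemiring R] (P : Set (Set α)) : Subalgebra R (α → R) where
  carrier := {f | ∀ p ∈ P, ∀ x ∈ p, ∀ y ∈ p, f x = f y}
  mul_mem' hf hg p hp x hx y hy := by simp only [Pi.mul_apply, hf p hp x hx y hy, hg p hp x hx y hy]
  add_mem' hf hg p hp x hx y hy := by simp only [Pi.add_apply, hf p hp x hx y hy, hg p hp x hx y hy]
  algebraMap_mem' _ _ _ _ _ _ _ := rfl

theorem finrank_constOnBlocks_le [CommRing R] [StrongRankCondition R] [Finite α] {P : Set (Set α)}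
    (hP : IsPartitionOf Set.univ P) :
    Module.finrank R (Subalgebra.toSubmodule (constOnBlocks R P)) ≤ P.ncard := by
  choose rep hrep using fun p : P => (hP.1 p p.2).1
  let L := (LinearMap.pi fun p => LinearMap.proj (rep p)) ∘ₗ
    (Subalgebra.toSubmodule (constOnBlocks R P)).subtype
  have hL : Function.Injective L := by
    intro f g hfg
    ext x
    obtain ⟨p, ⟨hp, hxp⟩, -⟩ := hP.2 x trivial
    calc (f : α → R) x = (f : α → R) (rep ⟨p, hp⟩) := f.2 p hp x hxp _ (hrep ⟨p, hp⟩)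
      _ = (g : α → R) (rep ⟨p, hp⟩) := congrFun hfg ⟨p, hp⟩
      _ = (g : α → R) x := (g.2 p hp x hxp _ (hrep ⟨p, hp⟩)).symm
  have := Fintype.ofFinite P
  calc _ ≤ Module.finrank R (P → R) := LinearMap.finrank_le_finrank_of_injective hL
    _ = P.ncard := by rw [Module.finrank_pi, Fintype.card_eq_nat_card, Nat.card_coe_set_eq]

end ConstOnBlocks

/-- for a supercharacter theory `(Y, K)` of `G`, every element of the
subalgebra of `cf(G)` generated by the Wedderburn sums `{σ_X : X ∈ Y}` lies in the
linear span of `{σ_X : X ∈ Y}`. -/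
theorem stmt6 (G : Type) [Group G] [Fintype G] (Y : Set (Set (G → ℂ))) (K : Set (Set G))
    (hsct : IsSCT G Y K) :
    ∀ a ∈ wAlg G Y, a ∈ Submodule.span ℂ {s | ∃ X ∈ Y, s = wsum X} := by
  obtain ⟨hY, hK, -, hcard, hconst⟩ := hsct
  have hgen : {s | ∃ X ∈ Y, s = wsum X} = wsum '' Y := by ext; simp [eq_comm]
  have hsub : wsum '' Y ⊆ constOnBlocks ℂ K := by rintro _ ⟨X, hX, rfl⟩; exact hconst X hX
  have hspan : Submodule.span ℂ (wsum '' Y) = Subalgebra.toSubmodule (constOnBlocks ℂ K) :=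
    Submodule.eq_of_le_of_finrank_le (Submodule.span_le.2 hsub) <| by
      rw [finrank_span_wsum hY.isPartialPartition, hcard]
      exact finrank_constOnBlocks_le ℂ hK
  intro a ha
  have hmem : a ∈ constOnBlocks ℂ K :=
    NonUnitalAlgebra.adjoin_le (S := (constOnBlocks ℂ K).toNonUnitalSubalgebra) (hgen ▸ hsub) ha
  rwa [hgen, hspan]
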